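/- arXiv:math/0702604 — 2 statements merged into one kernel-verified Lean document; each statement's English description precedes it below -/
import Mathlib

section
/- Let C = ⊕_{n∈ℕ} C_n be a strongly ℕ-graded coalgebra over a field (i.e. each component Δ_{i,j} : C_{i+j} → C_i ⊗ C_j of the comultiplication is injective). Then for every n ∈ ℕ, the truncation C(n) = ⊕_{i<n} C_i equals the n-th wedge power C_0^{∧n} of C_0 in C. -/
open TensorProduct DirectSum

universe u

variable (k : Type u) [Field k]

/-- Transport along an equality of indices. -/
def lcast (C : ℕ → Type u) [∀ n, AddCommGroup (C n)] [∀ n, Module k (C n)]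
    {m n : ℕ} (h : m = n) : C m ≃ₗ[k] C n := by
  subst h; exact LinearEquiv.refl k (C m)

section WedgePowers

variable (A : Type u) [AddCommGroup A] [Module k A] [Coalgebra k A]

/-- The iterated quotient-tensor spaces `(A/D)^{⊗(n+1)}`. -/
noncomputable def Qp (D : Submodule k A) : ℕ → ModuleCat.{u} k
  | 0 => ModuleCat.of k (A ⧸ D)
  | n + 1 => ModuleCat.of k ((A ⧸ D) ⊗[k] (Qp D n))

/-- The map `p^{⊗(n+1)} ∘ Δ^n : A → (A/D)^{⊗(n+1)}`. -/
noncomputable def psiMap (D : Submodule k A) : ∀ n : ℕ, A →ₗ[k] Qp k A D n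
  | 0 => D.mkQ
  | n + 1 => (TensorProduct.map D.mkQ (psiMap D n)) ∘ₗ
      (Coalgebra.comul : A →ₗ[k] A ⊗[k] A)

/-- The iterated wedge powers `D^{∧n} = ker(p^{⊗n} ∘ Δ^{n-1})`, with `D^{∧0} = 0`. -/
noncomputable def wpow (D : Submodule k A) : ℕ → Submodule k A
  | 0 => ⊥
  | n + 1 => LinearMap.ker (psiMap k A D n)

end WedgePowers

section Helpers

variable (C : ℕ → Type u) [∀ n, AddCommGroup (C n)] [∀ n, Module k (C n)]

set_option linter.unusedSectionVars false

lemma comp_lof_eq (a0 a : ℕ) :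
    (DirectSum.component k ℕ C a0) ∘ₗ (DirectSum.lof k ℕ C a) =
      if h : a = a0 then (lcast k C h).toLinearMap else 0 := by
  ext c
  simp only [LinearMap.comp_apply, DirectSum.component.of]
  split_ifs with h
  · subst h; simp [lcast]
  · simp

lemma mem_T (m : ℕ) (x : ⨁ n, C n) :
    x ∈ (⨆ i : Fin m, LinearMap.range (DirectSum.lof k ℕ C i.1)) ↔
      ∀ j, m ≤ j → x j = 0 := by
  classical
  constructor
  · intro hx j hj
    refine Submodule.iSup_induction _ (motive := fun y => y j = 0) hx ?_ rfl ?_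
    · rintro i _ ⟨c, rfl⟩
      exact DFinsupp.single_eq_of_ne (by omega)
    · intro y z hy hz
      rw [DirectSum.add_apply, hy, hz, add_zero]
  · intro h
    rw [← DirectSum.sum_support_of x]
    refine Submodule.sum_mem _ ?_
    intro i hi
    have hi' : i < m := by
      by_contra hc
      exact (DFinsupp.mem_support_iff.mp hi) (h i (by omega))
    exact Submodule.mem_iSup_of_mem ⟨i, hi'⟩ ⟨x i, rfl⟩

variable [Coalgebra k (⨁ n, C n)]
    (Δab : ∀ a b : ℕ, C (a + b) →ₗ[k] C a ⊗[k] C b)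
    (hgr : ∀ n : ℕ, Coalgebra.comul ∘ₗ DirectSum.lof k ℕ C n =
      ∑ p ∈ (Finset.HasAntidiagonal.antidiagonal n).attach,
        (TensorProduct.map (DirectSum.lof k ℕ C p.1.1) (DirectSum.lof k ℕ C p.1.2)) ∘ₗ
          Δab p.1.1 p.1.2 ∘ₗ
            (lcast k C (Finset.HasAntidiagonal.mem_antidiagonal.mp p.2).symm).toLinearMap)

lemma mkQ_lof_zero :
    (LinearMap.range (DirectSum.lof k ℕ C 0)).mkQ ∘ₗ DirectSum.lof k ℕ C 0 = 0 := by
  ext c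
  simp [Submodule.Quotient.mk_eq_zero]

include hgr in
lemma psi_lof_zero : ∀ n b, b ≤ n →
    psiMap k (⨁ m, C m) (LinearMap.range (DirectSum.lof k ℕ C 0)) n ∘ₗ
      DirectSum.lof k ℕ C b = 0 := by
  intro n
  induction n with
  | zero =>
    intro b hb
    interval_cases b
    exact mkQ_lof_zero k C
  | succ n ih =>
    intro b hb
    show (TensorProduct.map _ _ ∘ₗ Coalgebra.comul) ∘ₗ DirectSum.lof k ℕ C b = 0
    rw [LinearMap.comp_assoc, hgr b]
    ext c
    simp only [LinearMap.comp_apply, LinearMap.sum_apply, map_sum, LinearMap.zero_apply]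
    refine Finset.sum_eq_zero ?_
    rintro ⟨⟨a, b'⟩, hp⟩ _
    rw [← LinearMap.comp_apply (TensorProduct.map _ _) (TensorProduct.map _ _),
      ← TensorProduct.map_comp]
    have hab : a + b' = b := Finset.HasAntidiagonal.mem_antidiagonal.mp hp
    rcases Nat.eq_zero_or_pos a with h1 | h1
    · subst h1
      rw [mkQ_lof_zero, TensorProduct.map_zero_left]
      simp
    · rw [ih b' (by omega), TensorProduct.map_zero_right]
      simp

include hgr in
lemma psi_ker_le (hstrong : ∀ i j : ℕ, Function.Injective (Δab i j)) :
    ∀ n (x : ⨁ m, C m),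
      psiMap k (⨁ m, C m) (LinearMap.range (DirectSum.lof k ℕ C 0)) n x = 0 →
      x ∈ ⨆ i : Fin (n + 1), LinearMap.range (DirectSum.lof k ℕ C i.1) := by
  intro n
  induction n with
  | zero =>
    intro x hx
    have : x ∈ LinearMap.range (DirectSum.lof k ℕ C 0) :=
      (Submodule.Quotient.mk_eq_zero _).mp hx
    exact Submodule.mem_iSup_of_mem ⟨0, Nat.zero_lt_one⟩ this
  | succ n ih =>
    intro x hx
    classical
    set D := LinearMap.range (DirectSum.lof k ℕ C 0) with hD
    -- The "high" submodule
    let H : Submodule k (⨁ m, C m) :=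
      { carrier := {y | ∀ j, j ≤ n → y j = 0}
        add_mem' := fun ha hb j hj => by
          rw [DirectSum.add_apply, ha j hj, hb j hj, add_zero]
        zero_mem' := fun j hj => rfl
        smul_mem' := fun c y hy j hj => by
          rw [DirectSum.smul_apply, hy j hj, smul_zero] }
    let f := (psiMap k (⨁ m, C m) D n) ∘ₗ H.subtype
    have hker : LinearMap.ker f = ⊥ := by
      apply LinearMap.ker_eq_bot'.mpr
      intro y hy
      have h1 := ih y.1 hy
      have h2 := (mem_T k C (n + 1) y.1).mp h1
      apply Subtype.ext
      apply DFinsupp.ext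
      intro j
      rcases le_or_gt j n with h | h
      · exact y.2 j h
      · exact h2 j h
    obtain ⟨g, hg⟩ := f.exists_leftInverse_of_injective hker
    let σ : (Qp k (⨁ m, C m) D n) →ₗ[k] C (n + 1) :=
      (DirectSum.component k ℕ C (n + 1)) ∘ₗ H.subtype ∘ₗ g
    have key_σ : ∀ b, (σ ∘ₗ psiMap k (⨁ m, C m) D n) ∘ₗ DirectSum.lof k ℕ C b
        = if h : b = n + 1 then (lcast k C h).toLinearMap else 0 := by
      intro b
      rcases le_or_gt b n with hb | hb
      · rw [LinearMap.comp_assoc, psi_lof_zero k C Δab hgr n b hb, LinearMap.comp_zero,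
          dif_neg (by omega)]
      · ext c
        have hmem : (DirectSum.lof k ℕ C b c) ∈ H := fun j hj =>
          DFinsupp.single_eq_of_ne (by omega)
        have hgf : g ((psiMap k (⨁ m, C m) D n) (DirectSum.lof k ℕ C b c)) = ⟨_, hmem⟩ := by
          have hfc : (psiMap k (⨁ m, C m) D n) (DirectSum.lof k ℕ C b c)
              = f ⟨_, hmem⟩ := rfl
          rw [hfc, ← LinearMap.comp_apply, hg]; rfl
        have hσ : ((σ ∘ₗ psiMap k (⨁ m, C m) D n) ∘ₗ DirectSum.lof k ℕ C b) c
            = DirectSum.component k ℕ C (n + 1)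
              ((g ((psiMap k (⨁ m, C m) D n) (DirectSum.lof k ℕ C b c)) : H)
                : ⨁ m, C m) := rfl
        rw [hσ, hgf]
        show DirectSum.component k ℕ C (n + 1) (DirectSum.lof k ℕ C b c) = _
        rw [← LinearMap.comp_apply, comp_lof_eq]
    rw [mem_T]
    intro j hj
    by_cases hsupp : j ∈ DFinsupp.support x
    swap
    · exact DFinsupp.notMem_support_iff.mp hsupp
    set a0 := j - (n + 1) with ha0def
    have ha0 : j = a0 + (n + 1) := by omega
    have hDle : D ≤ LinearMap.ker (DirectSum.component k ℕ C a0) := by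
      rintro _ ⟨c, rfl⟩
      rw [LinearMap.mem_ker, DirectSum.component.of, dif_neg (by omega)]
    set g' := D.liftQ (DirectSum.component k ℕ C a0) hDle with hg'
    have h1 : TensorProduct.map (DirectSum.component k ℕ C a0)
        (σ ∘ₗ psiMap k (⨁ m, C m) D n) (Coalgebra.comul x) = 0 := by
      have hcomp : TensorProduct.map (DirectSum.component k ℕ C a0)
          (σ ∘ₗ psiMap k (⨁ m, C m) D n)
          = TensorProduct.map g' σ ∘ₗ TensorProduct.map D.mkQ (psiMap k (⨁ m, C m) D n) := by
        rw [← TensorProduct.map_comp, Submodule.liftQ_mkQ]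
      rw [hcomp, LinearMap.comp_apply]
      have hx' : TensorProduct.map D.mkQ (psiMap k (⨁ m, C m) D n) (Coalgebra.comul x) = 0 := hx
      rw [hx', map_zero]
    have key2 : ∀ m (c : C m),
        TensorProduct.map (DirectSum.component k ℕ C a0) (σ ∘ₗ psiMap k (⨁ m, C m) D n)
          (Coalgebra.comul (DirectSum.lof k ℕ C m c)) =
        if h : m = j then Δab a0 (n + 1) (lcast k C (h.trans ha0) c) else 0 := by
      intro m c
      rw [← LinearMap.comp_apply Coalgebra.comul, hgr m, LinearMap.sum_apply, map_sum]
      by_cases hm : m = j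
      · rw [dif_pos hm]
        subst hm
        rw [Finset.sum_eq_single ⟨(a0, n + 1), Finset.HasAntidiagonal.mem_antidiagonal.mpr ha0.symm⟩]
        · rw [LinearMap.comp_apply, LinearMap.comp_apply,
            ← LinearMap.comp_apply (TensorProduct.map _ _) (TensorProduct.map _ _),
            ← TensorProduct.map_comp, comp_lof_eq, key_σ, dif_pos rfl, dif_pos rfl]
          simp only [lcast, LinearEquiv.refl_toLinearMap, TensorProduct.map_id,
            LinearMap.id_coe, id_eq]
          rfl
        · intro p _ hne
          have hab : p.1.1 + p.1.2 = m := Finset.HasAntidiagonal.mem_antidiagonal.mp p.2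
          rw [LinearMap.comp_apply, LinearMap.comp_apply,
            ← LinearMap.comp_apply (TensorProduct.map _ _) (TensorProduct.map _ _),
            ← TensorProduct.map_comp]
          by_cases ha : p.1.1 = a0
          · exfalso
            apply hne
            apply Subtype.ext
            have hb : p.1.2 = n + 1 := by omega
            have : p.1 = (a0, n + 1) := Prod.ext ha hb
            exact this
          · rw [comp_lof_eq, dif_neg ha, TensorProduct.map_zero_left]
            simp
        · intro h
          exact absurd (Finset.mem_attach _ _) h
      · rw [dif_neg hm]
        refine Finset.sum_eq_zero ?_
        intro p _
        have hab : p.1.1 + p.1.2 = m := Finset.HasAntidiagonal.mem_antidiagonal.mp p.2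
        rw [LinearMap.comp_apply, LinearMap.comp_apply,
          ← LinearMap.comp_apply (TensorProduct.map _ _) (TensorProduct.map _ _),
          ← TensorProduct.map_comp]
        by_cases ha : p.1.1 = a0
        · rw [key_σ, dif_neg (by omega), TensorProduct.map_zero_right]
          simp
        · rw [comp_lof_eq, dif_neg ha, TensorProduct.map_zero_left]
          simp
    have hx_sum : Coalgebra.comul (R := k) x
        = ∑ m ∈ DFinsupp.support x, Coalgebra.comul (DirectSum.lof k ℕ C m (x m)) := by
      rw [← map_sum]
      congr 1
      conv_lhs => rw [← DirectSum.sum_support_of x]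
      exact Finset.sum_congr rfl fun i _ => rfl
    rw [hx_sum, map_sum, Finset.sum_congr rfl (fun m _ => key2 m (x m)),
      Finset.sum_dite_eq' _ j (fun m h => Δab a0 (n + 1) (lcast k C (h.trans ha0) (x m))),
      if_pos hsupp] at h1
    have h2 : (lcast k C ha0) (x j) = 0 := by
      apply hstrong a0 (n + 1)
      rw [h1, map_zero]
    have := (LinearEquiv.map_eq_zero_iff _).mp h2
    exact this

end Helpers

/-- Let `C = ⊕_{n∈ℕ} C_n` be a strongly ℕ-graded coalgebra over a field (i.e.
every component `Δ_{i,j} : C_{i+j} → C_i ⊗ C_j` is injective). Then for every `n ∈ ℕ` the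
truncation `C(n) = ⊕_{i<n} C_i` equals the `n`-th wedge power `C_0^{∧n}` of `C_0` in `C`. -/
theorem stmt8 (C : ℕ → Type u) [∀ n, AddCommGroup (C n)] [∀ n, Module k (C n)]
    [Coalgebra k (⨁ n, C n)]
    (Δab : ∀ a b : ℕ, C (a + b) →ₗ[k] C a ⊗[k] C b)
    (hgr : ∀ n : ℕ, Coalgebra.comul ∘ₗ DirectSum.lof k ℕ C n =
      ∑ p ∈ (Finset.HasAntidiagonal.antidiagonal n).attach,
        (TensorProduct.map (DirectSum.lof k ℕ C p.1.1) (DirectSum.lof k ℕ C p.1.2)) ∘ₗ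
          Δab p.1.1 p.1.2 ∘ₗ
            (lcast k C (Finset.HasAntidiagonal.mem_antidiagonal.mp p.2).symm).toLinearMap)
    (hstrong : ∀ i j : ℕ, Function.Injective (Δab i j)) :
    ∀ n : ℕ,
      (⨆ i : Fin n, LinearMap.range (DirectSum.lof k ℕ C i.1)) =
        wpow k (⨁ m, C m) (LinearMap.range (DirectSum.lof k ℕ C 0)) n := by
  intro n
  cases n with
  | zero =>
    rw [iSup_of_empty]
    rfl
  | succ n =>
    apply le_antisymm
    · apply iSup_le
      rintro i _ ⟨c, rfl⟩
      show DirectSum.lof k ℕ C i.1 c ∈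
        LinearMap.ker (psiMap k (⨁ m, C m) (LinearMap.range (DirectSum.lof k ℕ C 0)) n)
      rw [LinearMap.mem_ker, ← LinearMap.comp_apply,
        psi_lof_zero k C Δab hgr n i.1 (by omega), LinearMap.zero_apply]
    · intro x hx
      exact psi_ker_le k C Δab hgr hstrong n x (LinearMap.mem_ker.mp hx)
end

section
/- Let C = ⊕_{n∈ℕ} C_n be a graded coalgebra over a field, and let ψ : C → T^c_{C_0}(C_1) be the unique coalgebra homomorphism with p_0∘ψ = p_0^C and p_1∘ψ = p_1^C. Then the following are equivalent: (a) C is strongly ℕ-graded; (a') Δ_{a,1} : C_{a+1} → C_a ⊗ C_1 is injective for every a; (b) every component ψ_n is injective; (c) ψ is injective; (d) C(n) = C_0^{∧n} for all n; (e) C(2) = C_0^{∧2}. -/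
open TensorProduct DirectSum

universe u

variable (k : Type u) [Field k]

section Aux1
variable {k} {C : ℕ → Type u} [∀ n, AddCommGroup (C n)] [∀ n, Module k (C n)]

theorem lcast_self {m : ℕ} (h : m = m) (x : C m) : lcast k C h x = x := rfl

theorem lcast_lcast {a b c : ℕ} (h1 : a = b) (h2 : b = c) (x : C a) :
    lcast k C h2 (lcast k C h1 x) = lcast k C (h1.trans h2) x := by subst h1 h2; rfl

theorem comp_lof_self (i : ℕ) :
    DirectSum.component k ℕ C i ∘ₗ DirectSum.lof k ℕ C i = LinearMap.id :=
  LinearMap.ext fun x => DirectSum.component.lof_self (R := k) i x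

theorem comp_lof_ne {i j : ℕ} (h : j ≠ i) :
    DirectSum.component k ℕ C i ∘ₗ DirectSum.lof k ℕ C j = 0 := by
  apply LinearMap.ext fun x => ?_
  simp only [LinearMap.comp_apply, DirectSum.component.of, LinearMap.zero_apply, dif_neg h]

theorem inj_of_comp_lcast {m n : ℕ} (h : m = n) {V : Type u} [AddCommGroup V] [Module k V]
    (f : C n →ₗ[k] V)
    (hf : Function.Injective (f ∘ₗ (lcast k C h).toLinearMap)) : Function.Injective f := by
  intro a b hab
  have h2 := hf (a₁ := (lcast k C h).symm a) (a₂ := (lcast k C h).symm b)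
    (by simpa using hab)
  simpa using congrArg (lcast k C h) h2

theorem map_map_assoc {M N P M' N' P' : Type u}
    [AddCommGroup M] [Module k M] [AddCommGroup N] [Module k N] [AddCommGroup P] [Module k P]
    [AddCommGroup M'] [Module k M'] [AddCommGroup N'] [Module k N'] [AddCommGroup P'] [Module k P']
    (f : M →ₗ[k] M') (g : N →ₗ[k] N') (h : P →ₗ[k] P') :
    TensorProduct.map f (TensorProduct.map g h) ∘ₗ (TensorProduct.assoc k M N P).toLinearMap
      = (TensorProduct.assoc k M' N' P').toLinearMap ∘ₗ
          TensorProduct.map (TensorProduct.map f g) h := by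
  apply TensorProduct.ext_threefold
  intro x y z
  simp

end Aux1

section Aux2
variable {k} {C : ℕ → Type u} [∀ n, AddCommGroup (C n)] [∀ n, Module k (C n)]
  [Coalgebra k (⨁ n, C n)]
  (Δab : ∀ a b : ℕ, C (a + b) →ₗ[k] C a ⊗[k] C b)

theorem keySum
    (hgr : ∀ n : ℕ, Coalgebra.comul ∘ₗ DirectSum.lof k ℕ C n =
      ∑ p ∈ (Finset.HasAntidiagonal.antidiagonal n).attach,
        (TensorProduct.map (DirectSum.lof k ℕ C p.1.1) (DirectSum.lof k ℕ C p.1.2)) ∘ₗ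
          Δab p.1.1 p.1.2 ∘ₗ
            (lcast k C (Finset.HasAntidiagonal.mem_antidiagonal.mp p.2).symm).toLinearMap)
    (n : ℕ) (x : C n) :
    (Coalgebra.comul (R := k) (DirectSum.lof k ℕ C n x)) =
      ∑ p ∈ (Finset.HasAntidiagonal.antidiagonal n).attach,
        (TensorProduct.map (DirectSum.lof k ℕ C p.1.1) (DirectSum.lof k ℕ C p.1.2))
          (Δab p.1.1 p.1.2 ((lcast k C (Finset.HasAntidiagonal.mem_antidiagonal.mp p.2).symm) x)) := by
  have h := DFunLike.congr_fun (hgr n) x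
  simpa only [LinearMap.comp_apply, LinearMap.sum_apply, LinearEquiv.coe_coe] using h

variable {V W : Type u} [AddCommGroup V] [Module k V] [AddCommGroup W] [Module k W]

theorem keyApp
    (hgr : ∀ n : ℕ, Coalgebra.comul ∘ₗ DirectSum.lof k ℕ C n =
      ∑ p ∈ (Finset.HasAntidiagonal.antidiagonal n).attach,
        (TensorProduct.map (DirectSum.lof k ℕ C p.1.1) (DirectSum.lof k ℕ C p.1.2)) ∘ₗ
          Δab p.1.1 p.1.2 ∘ₗ
            (lcast k C (Finset.HasAntidiagonal.mem_antidiagonal.mp p.2).symm).toLinearMap)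
    (F : (⨁ n, C n) →ₗ[k] V) (G : (⨁ n, C n) →ₗ[k] W) (n : ℕ) (x : C n) :
    TensorProduct.map F G (Coalgebra.comul (R := k) (DirectSum.lof k ℕ C n x)) =
      ∑ p ∈ (Finset.HasAntidiagonal.antidiagonal n).attach,
        (TensorProduct.map (F ∘ₗ DirectSum.lof k ℕ C p.1.1) (G ∘ₗ DirectSum.lof k ℕ C p.1.2))
          (Δab p.1.1 p.1.2 ((lcast k C (Finset.HasAntidiagonal.mem_antidiagonal.mp p.2).symm) x)) := by
  rw [keySum Δab hgr n x, map_sum]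
  refine Finset.sum_congr rfl fun p _ => ?_
  rw [TensorProduct.map_comp, LinearMap.comp_apply]

end Aux2

section Aux3
variable {k} {C : ℕ → Type u} [∀ n, AddCommGroup (C n)] [∀ n, Module k (C n)]
  [Coalgebra k (⨁ n, C n)]
  (Δab : ∀ a b : ℕ, C (a + b) →ₗ[k] C a ⊗[k] C b)
  (hgr : ∀ n : ℕ, Coalgebra.comul ∘ₗ DirectSum.lof k ℕ C n =
      ∑ p ∈ (Finset.HasAntidiagonal.antidiagonal n).attach,
        (TensorProduct.map (DirectSum.lof k ℕ C p.1.1) (DirectSum.lof k ℕ C p.1.2)) ∘ₗ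
          Δab p.1.1 p.1.2 ∘ₗ
            (lcast k C (Finset.HasAntidiagonal.mem_antidiagonal.mp p.2).symm).toLinearMap)

include hgr

/-- extraction of `Δ_{a,b}` from the comultiplication. -/
theorem piAB (a b : ℕ) :
    TensorProduct.map (DirectSum.component k ℕ C a) (DirectSum.component k ℕ C b) ∘ₗ
        Coalgebra.comul ∘ₗ DirectSum.lof k ℕ C (a + b) = Δab a b := by
  apply LinearMap.ext fun x => ?_
  simp only [LinearMap.comp_apply]
  rw [keyApp Δab hgr]
  rw [Finset.sum_eq_single_of_mem
    (⟨(a, b), Finset.HasAntidiagonal.mem_antidiagonal.mpr rfl⟩ : {p // p ∈ Finset.HasAntidiagonal.antidiagonal (a + b)})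
    (Finset.mem_attach _ _)]
  · simp only [comp_lof_self, TensorProduct.map_id, lcast_self, LinearMap.id_apply]
  · intro q _ hq
    have hne : q.1.1 ≠ a ∨ q.1.2 ≠ b := by
      by_contra hc
      push_neg at hc
      exact hq (Subtype.ext (Prod.ext hc.1 hc.2))
    rcases hne with h | h
    · rw [comp_lof_ne h, TensorProduct.map_zero_left, LinearMap.zero_apply]
    · rw [comp_lof_ne h, TensorProduct.map_zero_right, LinearMap.zero_apply]

theorem piAB0 {a b n : ℕ} (hne : a + b ≠ n) :
    TensorProduct.map (DirectSum.component k ℕ C a) (DirectSum.component k ℕ C b) ∘ₗ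
        Coalgebra.comul ∘ₗ DirectSum.lof k ℕ C n = 0 := by
  apply LinearMap.ext fun x => ?_
  simp only [LinearMap.comp_apply, LinearMap.zero_apply]
  rw [keyApp Δab hgr]
  refine Finset.sum_eq_zero fun p _ => ?_
  have hp := Finset.HasAntidiagonal.mem_antidiagonal.mp p.2
  have : p.1.1 ≠ a ∨ p.1.2 ≠ b := by
    by_contra hc
    push_neg at hc
    exact hne (by omega)
  rcases this with h | h
  · rw [comp_lof_ne h, TensorProduct.map_zero_left, LinearMap.zero_apply]
  · rw [comp_lof_ne h, TensorProduct.map_zero_right, LinearMap.zero_apply]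

end Aux3

section Aux4
variable {k} {C : ℕ → Type u} [∀ n, AddCommGroup (C n)] [∀ n, Module k (C n)]
  [Coalgebra k (⨁ n, C n)]
  (Δab : ∀ a b : ℕ, C (a + b) →ₗ[k] C a ⊗[k] C b)
  (hgr : ∀ n : ℕ, Coalgebra.comul ∘ₗ DirectSum.lof k ℕ C n =
      ∑ p ∈ (Finset.HasAntidiagonal.antidiagonal n).attach,
        (TensorProduct.map (DirectSum.lof k ℕ C p.1.1) (DirectSum.lof k ℕ C p.1.2)) ∘ₗ
          Δab p.1.1 p.1.2 ∘ₗ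
            (lcast k C (Finset.HasAntidiagonal.mem_antidiagonal.mp p.2).symm).toLinearMap)
include hgr

/-- Componentwise coassociativity. -/
theorem coassocC (a b c : ℕ) :
    (TensorProduct.assoc k (C a) (C b) (C c)).toLinearMap ∘ₗ
        (Δab a b).rTensor (C c) ∘ₗ Δab (a + b) c ∘ₗ
          (lcast k C (Nat.add_assoc a b c).symm).toLinearMap
      = (Δab b c).lTensor (C a) ∘ₗ Δab a (b + c) := by
  apply LinearMap.ext fun x => ?_
  set u := DirectSum.lof k ℕ C (a + (b + c)) x with hu
  have H := DFunLike.congr_fun (Coalgebra.coassoc (R := k) (A := ⨁ n, C n)) u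
  have H2 := congrArg (TensorProduct.map (DirectSum.component k ℕ C a)
    (TensorProduct.map (DirectSum.component k ℕ C b) (DirectSum.component k ℕ C c))) H
  simp only [LinearMap.comp_apply, LinearEquiv.coe_coe] at H2 ⊢
  -- compute the right-hand side of H2
  have e1 : TensorProduct.map (DirectSum.component k ℕ C a)
      (TensorProduct.map (DirectSum.component k ℕ C b) (DirectSum.component k ℕ C c))
      ((Coalgebra.comul (R := k)).lTensor _ (Coalgebra.comul u))
      = (Δab b c).lTensor (C a) (Δab a (b + c) x) := by
    have : TensorProduct.map (DirectSum.component k ℕ C a)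
        (TensorProduct.map (DirectSum.component k ℕ C b) (DirectSum.component k ℕ C c))
        ((Coalgebra.comul (R := k)).lTensor _ (Coalgebra.comul u))
        = TensorProduct.map (DirectSum.component k ℕ C a)
            ((TensorProduct.map (DirectSum.component k ℕ C b) (DirectSum.component k ℕ C c))
              ∘ₗ Coalgebra.comul) (Coalgebra.comul u) := by
      rw [← LinearMap.comp_apply, LinearMap.lTensor, ← TensorProduct.map_comp,
        LinearMap.comp_id]
    rw [this, hu, keyApp Δab hgr]
    rw [Finset.sum_eq_single_of_mem
      (⟨(a, b + c), Finset.HasAntidiagonal.mem_antidiagonal.mpr rfl⟩ :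
        {p // p ∈ Finset.HasAntidiagonal.antidiagonal (a + (b + c))})
      (Finset.mem_attach _ _)]
    · rw [comp_lof_self, lcast_self, LinearMap.comp_assoc, piAB Δab hgr b c]
      rfl
    · intro q _ hq
      have hne : q.1.1 ≠ a := by
        intro hc
        apply hq
        have hp := Finset.HasAntidiagonal.mem_antidiagonal.mp q.2
        exact Subtype.ext (Prod.ext hc (by show q.1.2 = b + c; omega))
      rw [comp_lof_ne hne, TensorProduct.map_zero_left, LinearMap.zero_apply]
  -- compute the left-hand side of H2
  have e2 : TensorProduct.map (DirectSum.component k ℕ C a)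
      (TensorProduct.map (DirectSum.component k ℕ C b) (DirectSum.component k ℕ C c))
      ((TensorProduct.assoc k _ _ _) ((Coalgebra.comul (R := k)).rTensor _ (Coalgebra.comul u)))
      = (TensorProduct.assoc k (C a) (C b) (C c))
          ((Δab a b).rTensor (C c) (Δab (a + b) c
            (lcast k C (Nat.add_assoc a b c).symm x))) := by
    have hnat := DFunLike.congr_fun (map_map_assoc (k := k)
      (DirectSum.component k ℕ C a) (DirectSum.component k ℕ C b) (DirectSum.component k ℕ C c))
      ((Coalgebra.comul (R := k)).rTensor _ (Coalgebra.comul u))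
    simp only [LinearMap.comp_apply, LinearEquiv.coe_coe] at hnat
    rw [hnat]
    congr 1
    have : TensorProduct.map (TensorProduct.map (DirectSum.component k ℕ C a)
        (DirectSum.component k ℕ C b)) (DirectSum.component k ℕ C c)
        ((Coalgebra.comul (R := k)).rTensor _ (Coalgebra.comul u))
        = TensorProduct.map ((TensorProduct.map (DirectSum.component k ℕ C a)
            (DirectSum.component k ℕ C b)) ∘ₗ Coalgebra.comul)
            (DirectSum.component k ℕ C c) (Coalgebra.comul u) := by
      rw [← LinearMap.comp_apply, LinearMap.rTensor, ← TensorProduct.map_comp,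
        LinearMap.comp_id]
    rw [this, hu, keyApp Δab hgr]
    rw [Finset.sum_eq_single_of_mem
      (⟨(a + b, c), Finset.HasAntidiagonal.mem_antidiagonal.mpr (Nat.add_assoc a b c)⟩ :
        {p // p ∈ Finset.HasAntidiagonal.antidiagonal (a + (b + c))})
      (Finset.mem_attach _ _)]
    · rw [comp_lof_self, LinearMap.comp_assoc, piAB Δab hgr a b]
      rfl
    · intro q _ hq
      have hne : q.1.2 ≠ c := by
        intro hc
        apply hq
        have hp := Finset.HasAntidiagonal.mem_antidiagonal.mp q.2
        exact Subtype.ext (Prod.ext (by show q.1.1 = a + b; omega) hc)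
      rw [comp_lof_ne hne, TensorProduct.map_zero_right, LinearMap.zero_apply]
  rw [← e1, ← H2, e2]

end Aux4

section Aux5
variable {k} {C : ℕ → Type u} [∀ n, AddCommGroup (C n)] [∀ n, Module k (C n)]
  [Coalgebra k (⨁ n, C n)]
  (Δab : ∀ a b : ℕ, C (a + b) →ₗ[k] C a ⊗[k] C b)
  (hgr : ∀ n : ℕ, Coalgebra.comul ∘ₗ DirectSum.lof k ℕ C n =
      ∑ p ∈ (Finset.HasAntidiagonal.antidiagonal n).attach,
        (TensorProduct.map (DirectSum.lof k ℕ C p.1.1) (DirectSum.lof k ℕ C p.1.2)) ∘ₗ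
          Δab p.1.1 p.1.2 ∘ₗ
            (lcast k C (Finset.HasAntidiagonal.mem_antidiagonal.mp p.2).symm).toLinearMap)
include hgr

theorem counitR (n : ℕ) :
    (TensorProduct.lid k (C n)).toLinearMap ∘ₗ
        ((Coalgebra.counit (R := k) (A := ⨁ m, C m)) ∘ₗ DirectSum.lof k ℕ C 0).rTensor (C n) ∘ₗ
          Δab 0 n ∘ₗ (lcast k C (Nat.zero_add n).symm).toLinearMap = LinearMap.id := by
  apply LinearMap.ext fun x => ?_
  set u := DirectSum.lof k ℕ C n x with hu
  have e1 : TensorProduct.map (Coalgebra.counit (R := k)) (DirectSum.component k ℕ C n)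
      (Coalgebra.comul (R := k) u)
      = ((Coalgebra.counit (R := k) (A := ⨁ m, C m)) ∘ₗ DirectSum.lof k ℕ C 0).rTensor (C n)
          (Δab 0 n (lcast k C (Nat.zero_add n).symm x)) := by
    rw [hu, keyApp Δab hgr]
    rw [Finset.sum_eq_single_of_mem
      (⟨(0, n), Finset.HasAntidiagonal.mem_antidiagonal.mpr (Nat.zero_add n)⟩ :
        {p // p ∈ Finset.HasAntidiagonal.antidiagonal n})
      (Finset.mem_attach _ _)]
    · rw [comp_lof_self]
      rfl
    · intro q _ hq
      have hne : q.1.2 ≠ n := by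
        intro hc
        apply hq
        have hp := Finset.HasAntidiagonal.mem_antidiagonal.mp q.2
        exact Subtype.ext (Prod.ext (by show q.1.1 = 0; omega) hc)
      rw [comp_lof_ne hne, TensorProduct.map_zero_right, LinearMap.zero_apply]
  have e2 : TensorProduct.map (Coalgebra.counit (R := k)) (DirectSum.component k ℕ C n)
      (Coalgebra.comul (R := k) u) = (1 : k) ⊗ₜ[k] x := by
    rw [← LinearMap.lTensor_comp_rTensor, LinearMap.comp_apply, ← LinearMap.comp_apply
      (LinearMap.rTensor _ _), Coalgebra.rTensor_counit_comp_comul]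
    rw [hu]
    simp only [TensorProduct.mk_apply, LinearMap.lTensor_tmul]
    rw [DirectSum.component.lof_self]
  simp only [LinearMap.comp_apply, LinearEquiv.coe_coe, LinearMap.id_apply]
  rw [← e1, e2]
  simp

theorem counitL (n : ℕ) :
    (TensorProduct.rid k (C n)).toLinearMap ∘ₗ
        ((Coalgebra.counit (R := k) (A := ⨁ m, C m)) ∘ₗ DirectSum.lof k ℕ C 0).lTensor (C n) ∘ₗ
          Δab n 0 ∘ₗ (lcast k C (Nat.add_zero n).symm).toLinearMap = LinearMap.id := by
  apply LinearMap.ext fun x => ?_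
  set u := DirectSum.lof k ℕ C n x with hu
  have e1 : TensorProduct.map (DirectSum.component k ℕ C n) (Coalgebra.counit (R := k))
      (Coalgebra.comul (R := k) u)
      = ((Coalgebra.counit (R := k) (A := ⨁ m, C m)) ∘ₗ DirectSum.lof k ℕ C 0).lTensor (C n)
          (Δab n 0 (lcast k C (Nat.add_zero n).symm x)) := by
    rw [hu, keyApp Δab hgr]
    rw [Finset.sum_eq_single_of_mem
      (⟨(n, 0), Finset.HasAntidiagonal.mem_antidiagonal.mpr (Nat.add_zero n)⟩ :
        {p // p ∈ Finset.HasAntidiagonal.antidiagonal n})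
      (Finset.mem_attach _ _)]
    · rw [comp_lof_self]
      rfl
    · intro q _ hq
      have hne : q.1.1 ≠ n := by
        intro hc
        apply hq
        have hp := Finset.HasAntidiagonal.mem_antidiagonal.mp q.2
        exact Subtype.ext (Prod.ext hc (by show q.1.2 = 0; omega))
      rw [comp_lof_ne hne, TensorProduct.map_zero_left, LinearMap.zero_apply]
  have e2 : TensorProduct.map (DirectSum.component k ℕ C n) (Coalgebra.counit (R := k))
      (Coalgebra.comul (R := k) u) = x ⊗ₜ[k] (1 : k) := by
    rw [← LinearMap.rTensor_comp_lTensor, LinearMap.comp_apply, ← LinearMap.comp_apply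
      (LinearMap.lTensor _ _), Coalgebra.lTensor_counit_comp_comul]
    rw [hu]
    simp only [LinearMap.flip_apply, TensorProduct.mk_apply, LinearMap.rTensor_tmul]
    rw [DirectSum.component.lof_self]
  simp only [LinearMap.comp_apply, LinearEquiv.coe_coe, LinearMap.id_apply]
  rw [← e1, e2]
  simp

theorem injΔ_left0 (n : ℕ) : Function.Injective (Δab 0 n) := by
  have h : Function.Injective ⇑((TensorProduct.lid k (C n)).toLinearMap ∘ₗ
      ((Coalgebra.counit (R := k) (A := ⨁ m, C m)) ∘ₗ DirectSum.lof k ℕ C 0).rTensor (C n) ∘ₗ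
        Δab 0 n ∘ₗ (lcast k C (Nat.zero_add n).symm).toLinearMap) := by
    rw [counitR Δab hgr n]
    exact fun a b hab => hab
  simp only [LinearMap.coe_comp] at h
  exact inj_of_comp_lcast (Nat.zero_add n).symm (Δab 0 n) (h.of_comp.of_comp)

theorem injΔ_right0 (n : ℕ) : Function.Injective (Δab n 0) := by
  have h : Function.Injective ⇑((TensorProduct.rid k (C n)).toLinearMap ∘ₗ
      ((Coalgebra.counit (R := k) (A := ⨁ m, C m)) ∘ₗ DirectSum.lof k ℕ C 0).lTensor (C n) ∘ₗ
        Δab n 0 ∘ₗ (lcast k C (Nat.add_zero n).symm).toLinearMap) := by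
    rw [counitL Δab hgr n]
    exact fun a b hab => hab
  simp only [LinearMap.coe_comp] at h
  exact inj_of_comp_lcast (Nat.add_zero n).symm (Δab n 0) (h.of_comp.of_comp)

end Aux5

section Aux6
variable {k} {C : ℕ → Type u} [∀ n, AddCommGroup (C n)] [∀ n, Module k (C n)]
  [Coalgebra k (⨁ n, C n)]
  (Δab : ∀ a b : ℕ, C (a + b) →ₗ[k] C a ⊗[k] C b)
  (hgr : ∀ n : ℕ, Coalgebra.comul ∘ₗ DirectSum.lof k ℕ C n =
      ∑ p ∈ (Finset.HasAntidiagonal.antidiagonal n).attach,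
        (TensorProduct.map (DirectSum.lof k ℕ C p.1.1) (DirectSum.lof k ℕ C p.1.2)) ∘ₗ
          Δab p.1.1 p.1.2 ∘ₗ
            (lcast k C (Finset.HasAntidiagonal.mem_antidiagonal.mp p.2).symm).toLinearMap)
include hgr

theorem inj_all_of_right (h1 : ∀ a, Function.Injective (Δab a 1)) (i j : ℕ) :
    Function.Injective (Δab i j) := by
  induction j with
  | zero => exact injΔ_right0 Δab hgr i
  | succ j ih =>
    have hco := coassocC Δab hgr i j 1
    have hrhs : Function.Injective ⇑((TensorProduct.assoc k (C i) (C j) (C 1)).toLinearMap ∘ₗ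
        (Δab i j).rTensor (C 1) ∘ₗ Δab (i + j) 1 ∘ₗ
          (lcast k C (Nat.add_assoc i j 1).symm).toLinearMap) := by
      simp only [LinearMap.coe_comp, LinearEquiv.coe_coe]
      refine Function.Injective.comp (LinearEquiv.injective _) ?_
      refine Function.Injective.comp (Module.Flat.rTensor_preserves_injective_linearMap _ ih) ?_
      exact Function.Injective.comp (h1 (i + j)) (LinearEquiv.injective _)
    rw [hco] at hrhs
    simp only [LinearMap.coe_comp] at hrhs
    exact hrhs.of_comp

theorem inj_all_of_left (h1 : ∀ n, Function.Injective (Δab 1 n)) (i j : ℕ) :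
    Function.Injective (Δab i j) := by
  induction i with
  | zero => exact injΔ_left0 Δab hgr j
  | succ i ih =>
    have hco := coassocC Δab hgr 1 i j
    have hlhs : Function.Injective ⇑((Δab i j).lTensor (C 1) ∘ₗ Δab 1 (i + j)) := by
      simp only [LinearMap.coe_comp]
      exact (Module.Flat.lTensor_preserves_injective_linearMap _ ih).comp (h1 (i + j))
    rw [← hco] at hlhs
    simp only [LinearMap.coe_comp, LinearEquiv.coe_coe] at hlhs
    have h3 := inj_of_comp_lcast (Nat.add_assoc 1 i j).symm (Δab (1 + i) j)
      (hlhs.of_comp.of_comp)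
    have e : 1 + i = i + 1 := Nat.add_comm 1 i
    rw [e] at h3
    exact h3

end Aux6

/-- The truncation `C(m) = ⊕_{i<m} C_i` as a submodule. -/
noncomputable def truncSub (C : ℕ → Type u) [∀ n, AddCommGroup (C n)] [∀ n, Module k (C n)]
    (m : ℕ) : Submodule k (⨁ n, C n) :=
  ⨆ i : Fin m, LinearMap.range (DirectSum.lof k ℕ C i.1)

/-- A grading whose degree-`0` and degree-`1` components are those of `C`, and whose higher
components are given by a family `D`; used to realize the cotensor coalgebra `T^c_{C_0}(C_1)`. -/
def famT (C D : ℕ → Type u) : ℕ → Type u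
  | 0 => C 0
  | 1 => C 1
  | n + 2 => D n

instance famTAddCommGroup (C D : ℕ → Type u) [∀ n, AddCommGroup (C n)]
    [∀ n, AddCommGroup (D n)] : ∀ n, AddCommGroup (famT C D n)
  | 0 => inferInstanceAs (AddCommGroup (C 0))
  | 1 => inferInstanceAs (AddCommGroup (C 1))
  | n + 2 => inferInstanceAs (AddCommGroup (D n))

instance famTModule (C D : ℕ → Type u) [∀ n, AddCommGroup (C n)] [∀ n, AddCommGroup (D n)]
    [∀ n, Module k (C n)] [∀ n, Module k (D n)] : ∀ n, Module k (famT C D n)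
  | 0 => inferInstanceAs (Module k (C 0))
  | 1 => inferInstanceAs (Module k (C 1))
  | n + 2 => inferInstanceAs (Module k (D n))



section AuxW
variable {k} {C : ℕ → Type u} [∀ n, AddCommGroup (C n)] [∀ n, Module k (C n)]
  [Coalgebra k (⨁ n, C n)]
  (Δab : ∀ a b : ℕ, C (a + b) →ₗ[k] C a ⊗[k] C b)
  (hgr : ∀ n : ℕ, Coalgebra.comul ∘ₗ DirectSum.lof k ℕ C n =
      ∑ p ∈ (Finset.HasAntidiagonal.antidiagonal n).attach,
        (TensorProduct.map (DirectSum.lof k ℕ C p.1.1) (DirectSum.lof k ℕ C p.1.2)) ∘ₗ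
          Δab p.1.1 p.1.2 ∘ₗ
            (lcast k C (Finset.HasAntidiagonal.mem_antidiagonal.mp p.2).symm).toLinearMap)
include hgr

local notation "D0" => LinearMap.range (DirectSum.lof k ℕ C 0)

omit hgr in
theorem mkQ_lof0 : (D0).mkQ ∘ₗ DirectSum.lof k ℕ C 0 = 0 := by
  apply LinearMap.ext fun x => ?_
  simp only [LinearMap.comp_apply, Submodule.mkQ_apply, LinearMap.zero_apply]
  exact (Submodule.Quotient.mk_eq_zero _).mpr ⟨x, rfl⟩

/-- Projection of the quotient `(⨁ C)/C₀` onto a component of positive degree. -/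
noncomputable def qbar (m : ℕ) : ((⨁ n, C n) ⧸ (D0)) →ₗ[k] C m :=
  Submodule.liftQ _ (if _ : m = 0 then 0 else DirectSum.component k ℕ C m) (by
    rintro _ ⟨z, rfl⟩
    by_cases h : m = 0
    · simp [h]
    · simp only [LinearMap.mem_ker, dif_neg h]
      have := comp_lof_ne (C := C) (k := k) (Ne.symm h)
      exact DFunLike.congr_fun this z)

omit hgr in
theorem qbar_mkQ {m : ℕ} (hm : m ≠ 0) :
    qbar (k := k) (C := C) m ∘ₗ (D0).mkQ = DirectSum.component k ℕ C m := by
  rw [qbar, Submodule.liftQ_mkQ]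
  exact dif_neg hm

theorem psiMap_lof (n m : ℕ) (hm : m ≤ n) :
    psiMap k (⨁ j, C j) (D0) n ∘ₗ DirectSum.lof k ℕ C m = 0 := by
  induction n generalizing m with
  | zero =>
    interval_cases m
    exact mkQ_lof0
  | succ n ih =>
    apply LinearMap.ext fun x => ?_
    simp only [psiMap, LinearMap.comp_apply, LinearMap.zero_apply]
    erw [keyApp Δab hgr ((D0).mkQ) (psiMap k (⨁ j, C j) (D0) n) m x]
    refine Finset.sum_eq_zero fun p _ => ?_
    have hp := Finset.HasAntidiagonal.mem_antidiagonal.mp p.2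
    by_cases h0 : p.1.1 = 0
    · have hz : (D0).mkQ ∘ₗ DirectSum.lof k ℕ C p.1.1 = 0 := by rw [h0]; exact mkQ_lof0
      rw [hz, TensorProduct.map_zero_left, LinearMap.zero_apply]
      rfl
    · rw [ih p.1.2 (by omega), TensorProduct.map_zero_right, LinearMap.zero_apply]
      rfl

end AuxW

set_option linter.unusedSectionVars false

section AuxG
variable {k} {C : ℕ → Type u} [∀ n, AddCommGroup (C n)] [∀ n, Module k (C n)]
  [Coalgebra k (⨁ n, C n)]
  (Δab : ∀ a b : ℕ, C (a + b) →ₗ[k] C a ⊗[k] C b)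
  (hgr : ∀ n : ℕ, Coalgebra.comul ∘ₗ DirectSum.lof k ℕ C n =
      ∑ p ∈ (Finset.HasAntidiagonal.antidiagonal n).attach,
        (TensorProduct.map (DirectSum.lof k ℕ C p.1.1) (DirectSum.lof k ℕ C p.1.2)) ∘ₗ
          Δab p.1.1 p.1.2 ∘ₗ
            (lcast k C (Finset.HasAntidiagonal.mem_antidiagonal.mp p.2).symm).toLinearMap)
include hgr

local notation "D0" => LinearMap.range (DirectSum.lof k ℕ C 0)

/-- Target spaces for the projections of the iterated wedge maps. -/
noncomputable def Tgt : ℕ → ℕ → ModuleCat.{u} k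
  | 0, m => ModuleCat.of k (C m)
  | n + 1, m => ModuleCat.of k (C 1 ⊗[k] Tgt n (m - 1))

/-- Projection of `(⨁C/C₀)^{⊗(n+1)}` onto the multidegree `(1,…,1,m-n)` component. -/
noncomputable def Gmap : ∀ n m : ℕ, (Qp k (⨁ j, C j) (D0) n) →ₗ[k] (Tgt (k := k) (C := C) n m)
  | 0, m => qbar m
  | n + 1, m => TensorProduct.map (qbar 1) (Gmap (n) (m - 1))

theorem Gv (n m m' : ℕ) (hm : n + 1 ≤ m) (hne : m' ≠ m) :
    (Gmap (k := k) (C := C) n m) ∘ₗ psiMap k (⨁ j, C j) (D0) n ∘ₗ DirectSum.lof k ℕ C m' = 0 := by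
  induction n generalizing m m' with
  | zero =>
    apply LinearMap.ext fun x => ?_
    simp only [Gmap, psiMap, LinearMap.comp_apply, LinearMap.zero_apply]
    exact (DFunLike.congr_fun (qbar_mkQ (k := k) (C := C) (by omega))
      ((DirectSum.lof k ℕ C m') x)).trans (DFunLike.congr_fun (comp_lof_ne (k := k) (C := C) hne) x)
  | succ n ih =>
    apply LinearMap.ext fun x => ?_
    simp only [Gmap.eq_2, psiMap, LinearMap.comp_apply, LinearMap.zero_apply]
    refine Eq.trans (DFunLike.congr_fun (TensorProduct.map_comp (f₂ := qbar 1) (f₁ := (D0).mkQ)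
      (g₂ := Gmap (k := k) (C := C) n (m - 1)) (g₁ := psiMap k (⨁ j, C j) (D0) n)).symm
      (Coalgebra.comul ((DirectSum.lof k ℕ C m') x))) ?_
    erw [keyApp Δab hgr (qbar 1 ∘ₗ (D0).mkQ)
      ((Gmap (k := k) (C := C) n (m - 1)) ∘ₗ psiMap k (⨁ j, C j) (D0) n) m' x]
    refine Finset.sum_eq_zero fun p _ => ?_
    have hp := Finset.HasAntidiagonal.mem_antidiagonal.mp p.2
    by_cases h1 : p.1.1 = 1
    · have h2 : p.1.2 ≠ m - 1 := by omega
      have hih : (Gmap (k := k) (C := C) n (m - 1) ∘ₗ psiMap k (⨁ j, C j) (D0) n) ∘ₗ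
          DirectSum.lof k ℕ C p.1.2 = 0 := by
        rw [LinearMap.comp_assoc]
        exact ih (m - 1) p.1.2 (by omega) h2
      rw [hih, TensorProduct.map_zero_right, LinearMap.zero_apply]
      rfl
    · have hz : (qbar (k := k) (C := C) 1 ∘ₗ (D0).mkQ) ∘ₗ DirectSum.lof k ℕ C p.1.1 = 0 := by
        rw [qbar_mkQ (by omega)]
        exact comp_lof_ne (by omega)
      rw [hz, TensorProduct.map_zero_left, LinearMap.zero_apply]
      rfl

theorem Gi (ha : ∀ i j, Function.Injective (Δab i j)) (n m : ℕ) (hm : n + 1 ≤ m) :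
    Function.Injective
      ⇑((Gmap (k := k) (C := C) n m) ∘ₗ psiMap k (⨁ j, C j) (D0) n ∘ₗ DirectSum.lof k ℕ C m) := by
  induction n generalizing m with
  | zero =>
    have he : (Gmap (k := k) (C := C) 0 m) ∘ₗ psiMap k (⨁ j, C j) (D0) 0 ∘ₗ
          DirectSum.lof k ℕ C m
        = DirectSum.component k ℕ C m ∘ₗ DirectSum.lof k ℕ C m := by
      apply LinearMap.ext fun x => ?_
      simp only [Gmap, psiMap, LinearMap.comp_apply]
      exact DFunLike.congr_fun (qbar_mkQ (k := k) (C := C) (by omega)) ((DirectSum.lof k ℕ C m) x)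
    rw [he, comp_lof_self]
    exact fun a b hab => hab
  | succ n ih =>
    have hkey : (Gmap (k := k) (C := C) (n + 1) m) ∘ₗ psiMap k (⨁ j, C j) (D0) (n + 1) ∘ₗ
          DirectSum.lof k ℕ C m
        = (TensorProduct.map LinearMap.id
            ((Gmap (k := k) (C := C) n (m - 1)) ∘ₗ psiMap k (⨁ j, C j) (D0) n ∘ₗ
              DirectSum.lof k ℕ C (m - 1))) ∘ₗ Δab 1 (m - 1) ∘ₗ
            (lcast k C (by omega : m = 1 + (m - 1))).toLinearMap := by
      apply LinearMap.ext fun x => ?_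
      simp only [Gmap.eq_2, psiMap, LinearMap.comp_apply]
      refine Eq.trans (DFunLike.congr_fun (TensorProduct.map_comp (f₂ := qbar 1) (f₁ := (D0).mkQ)
        (g₂ := Gmap (k := k) (C := C) n (m - 1)) (g₁ := psiMap k (⨁ j, C j) (D0) n)).symm
        (Coalgebra.comul ((DirectSum.lof k ℕ C m) x))) ?_
      erw [keyApp Δab hgr (qbar 1 ∘ₗ (D0).mkQ)
        ((Gmap (k := k) (C := C) n (m - 1)) ∘ₗ psiMap k (⨁ j, C j) (D0) n) m x]
      rw [Finset.sum_eq_single_of_mem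
        (⟨(1, m - 1), Finset.HasAntidiagonal.mem_antidiagonal.mpr (by omega)⟩ :
          {p // p ∈ Finset.HasAntidiagonal.antidiagonal m})
        (Finset.mem_attach _ _)]
      · have he1 : (qbar (k := k) (C := C) 1 ∘ₗ (D0).mkQ) ∘ₗ DirectSum.lof k ℕ C 1
            = LinearMap.id := by
          rw [qbar_mkQ (by omega)]
          exact comp_lof_self 1
        rw [he1]
        rfl
      · intro q _ hq
        have hp := Finset.HasAntidiagonal.mem_antidiagonal.mp q.2
        by_cases h1 : q.1.1 = 1
        · have h2 : q.1.2 ≠ m - 1 := by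
            intro hc
            exact hq (Subtype.ext (Prod.ext h1 hc))
          have hih : (Gmap (k := k) (C := C) n (m - 1) ∘ₗ psiMap k (⨁ j, C j) (D0) n) ∘ₗ
              DirectSum.lof k ℕ C q.1.2 = 0 := by
            rw [LinearMap.comp_assoc]
            exact Gv Δab hgr n (m - 1) q.1.2 (by omega) h2
          rw [hih, TensorProduct.map_zero_right, LinearMap.zero_apply]
        · have hz : (qbar (k := k) (C := C) 1 ∘ₗ (D0).mkQ) ∘ₗ DirectSum.lof k ℕ C q.1.1
              = 0 := by
            rw [qbar_mkQ (by omega)]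
            exact comp_lof_ne (by omega)
          rw [hz, TensorProduct.map_zero_left, LinearMap.zero_apply]
    rw [hkey]
    have hflat := Module.Flat.lTensor_preserves_injective_linearMap (M := C 1)
      ((Gmap (k := k) (C := C) n (m - 1)) ∘ₗ psiMap k (⨁ j, C j) (D0) n ∘ₗ
        DirectSum.lof k ℕ C (m - 1)) (ih (m - 1) (by omega))
    exact hflat.comp ((ha 1 (m - 1)).comp (LinearEquiv.injective (lcast k C (by omega))))

end AuxG

/-- Let `C = ⊕ C_n` be a graded coalgebra over a field and
`ψ : C → T^c_{C_0}(C_1)` the unique coalgebra homomorphism with `p_0∘ψ = p_0` and `p_1∘ψ = p_1`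
into the cotensor coalgebra (here encoded as a graded coalgebra `T` with `T_0 = C_0`,
`T_1 = C_1`, the same structure maps in low degrees, and each `Δ^T_{1,n}` the canonical
inclusion of the cotensor product). Then the conditions (a), (a'), (b), (c), (d), (e) are all
equivalent. -/
theorem stmt14 (C D : ℕ → Type u)
    [∀ n, AddCommGroup (C n)] [∀ n, Module k (C n)]
    [∀ n, AddCommGroup (D n)] [∀ n, Module k (D n)]
    [Coalgebra k (⨁ n, C n)] [Coalgebra k (⨁ n, famT C D n)]
    (ΔabC : ∀ a b : ℕ, C (a + b) →ₗ[k] C a ⊗[k] C b)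
    (hgrC : ∀ n : ℕ, Coalgebra.comul ∘ₗ DirectSum.lof k ℕ C n =
      ∑ p ∈ (Finset.HasAntidiagonal.antidiagonal n).attach,
        (TensorProduct.map (DirectSum.lof k ℕ C p.1.1) (DirectSum.lof k ℕ C p.1.2)) ∘ₗ
          ΔabC p.1.1 p.1.2 ∘ₗ
            (lcast k C (Finset.HasAntidiagonal.mem_antidiagonal.mp p.2).symm).toLinearMap)
    (ΔabT : ∀ a b : ℕ, famT C D (a + b) →ₗ[k] famT C D a ⊗[k] famT C D b)
    (hgrT : ∀ n : ℕ, Coalgebra.comul ∘ₗ DirectSum.lof k ℕ (famT C D) n =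
      ∑ p ∈ (Finset.HasAntidiagonal.antidiagonal n).attach,
        (TensorProduct.map (DirectSum.lof k ℕ (famT C D) p.1.1)
            (DirectSum.lof k ℕ (famT C D) p.1.2)) ∘ₗ
          ΔabT p.1.1 p.1.2 ∘ₗ
            (lcast k (famT C D) (Finset.HasAntidiagonal.mem_antidiagonal.mp p.2).symm).toLinearMap)
    -- the coalgebra `T_0` and the `C_0`-bicomodule `T_1` are those coming from `C`:
    (hT00 : ΔabT 0 0 = ΔabC 0 0) (hT01 : ΔabT 0 1 = ΔabC 0 1) (hT10 : ΔabT 1 0 = ΔabC 1 0)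
    (hTcounit : (Coalgebra.counit : (⨁ n, famT C D n) →ₗ[k] k) ∘ₗ
        DirectSum.lof k ℕ (famT C D) 0 =
      (Coalgebra.counit : (⨁ n, C n) →ₗ[k] k) ∘ₗ DirectSum.lof k ℕ C 0)
    -- `T`, via `Δ^T_{1,n}`, is the cotensor coalgebra of `C_1` over `C_0`:
    (hcot : ∀ n : ℕ,
      Function.Injective (ΔabT 1 n) ∧
      LinearMap.range (ΔabT 1 n) =
        LinearMap.ker
          ((TensorProduct.assoc k (famT C D 1) (famT C D 0) (famT C D n)).toLinearMap ∘ₗ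
              (ΔabT 1 0).rTensor (famT C D n) -
            (ΔabT 0 n ∘ₗ
              (lcast k (famT C D) (Nat.zero_add n).symm).toLinearMap).lTensor (famT C D 1)))
    -- `ψ` is the canonical coalgebra homomorphism, graded with components `ψ_n`:
    (ψ : (⨁ n, C n) →ₗ[k] ⨁ n, famT C D n) (ψn : ∀ n, C n →ₗ[k] famT C D n)
    (hψcomul : Coalgebra.comul ∘ₗ ψ = (TensorProduct.map ψ ψ) ∘ₗ Coalgebra.comul)
    (hψcounit : (Coalgebra.counit : (⨁ n, famT C D n) →ₗ[k] k) ∘ₗ ψ = Coalgebra.counit)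
    (hψgr : ∀ n : ℕ, ψ ∘ₗ DirectSum.lof k ℕ C n = DirectSum.lof k ℕ (famT C D) n ∘ₗ ψn n)
    (hψ0 : DirectSum.component k ℕ (famT C D) 0 ∘ₗ ψ = DirectSum.component k ℕ C 0)
    (hψ1 : DirectSum.component k ℕ (famT C D) 1 ∘ₗ ψ = DirectSum.component k ℕ C 1) :
    [ -- (a) `C` is a strongly ℕ-graded coalgebra
      (∀ i j : ℕ, Function.Injective (ΔabC i j)),
      -- (a')
      (∀ a : ℕ, Function.Injective (ΔabC a 1)),
      -- (b)
      (∀ n : ℕ, Function.Injective (ψn n)),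
      -- (c)
      Function.Injective ψ,
      -- (d)
      (∀ n : ℕ, truncSub k C n =
        wpow k (⨁ m, C m) (LinearMap.range (DirectSum.lof k ℕ C 0)) n),
      -- (e)
      truncSub k C 2 =
        wpow k (⨁ m, C m) (LinearMap.range (DirectSum.lof k ℕ C 0)) 2 ].TFAE := by
    classical
  -- compatibility of ψ with components
  have hψcomp : ∀ m : ℕ, DirectSum.component k ℕ (famT C D) m ∘ₗ ψ
      = ψn m ∘ₗ DirectSum.component k ℕ C m := by
    intro m
    apply DirectSum.linearMap_ext
    intro j
    by_cases hj : j = m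
    · subst hj
      rw [LinearMap.comp_assoc, hψgr j, ← LinearMap.comp_assoc, comp_lof_self,
        LinearMap.id_comp, LinearMap.comp_assoc, comp_lof_self, LinearMap.comp_id]
    · rw [LinearMap.comp_assoc, hψgr j, ← LinearMap.comp_assoc, comp_lof_ne hj,
        LinearMap.zero_comp, LinearMap.comp_assoc, comp_lof_ne hj, LinearMap.comp_zero]
  have hψ0' : ψn 0 = (LinearMap.id : C 0 →ₗ[k] C 0) := by
    have h1 : DirectSum.component k ℕ (famT C D) 0 ∘ₗ (ψ ∘ₗ DirectSum.lof k ℕ C 0)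
        = ψn 0 := by
      rw [hψgr 0, ← LinearMap.comp_assoc, comp_lof_self, LinearMap.id_comp]
    rw [← LinearMap.comp_assoc, hψ0] at h1
    exact h1.symm.trans (comp_lof_self (C := C) 0)
  have hψ1' : ψn 1 = (LinearMap.id : C 1 →ₗ[k] C 1) := by
    have h1 : DirectSum.component k ℕ (famT C D) 1 ∘ₗ (ψ ∘ₗ DirectSum.lof k ℕ C 1)
        = ψn 1 := by
      rw [hψgr 1, ← LinearMap.comp_assoc, comp_lof_self, LinearMap.id_comp]
    rw [← LinearMap.comp_assoc, hψ1] at h1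
    exact h1.symm.trans (comp_lof_self (C := C) 1)
  -- the recursion identity for ψ
  have ψrec : ∀ m : ℕ, ΔabT 1 m ∘ₗ ψn (1 + m)
      = TensorProduct.map (ψn 1) (ψn m) ∘ₗ ΔabC 1 m := by
    intro m
    apply LinearMap.ext fun x => ?_
    have H := DFunLike.congr_fun hψcomul (DirectSum.lof k ℕ C (1 + m) x)
    simp only [LinearMap.comp_apply] at H
    have H2 := congrArg (TensorProduct.map (DirectSum.component k ℕ (famT C D) 1)
        (DirectSum.component k ℕ (famT C D) m)) H
    have e1 : TensorProduct.map (DirectSum.component k ℕ (famT C D) 1)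
        (DirectSum.component k ℕ (famT C D) m)
          (Coalgebra.comul (ψ (DirectSum.lof k ℕ C (1 + m) x)))
        = ΔabT 1 m (ψn (1 + m) x) := by
      have hg := DFunLike.congr_fun (hψgr (1 + m)) x
      simp only [LinearMap.comp_apply] at hg
      rw [hg]
      exact DFunLike.congr_fun (piAB ΔabT hgrT 1 m) (ψn (1 + m) x)
    have e2 : TensorProduct.map (DirectSum.component k ℕ (famT C D) 1)
        (DirectSum.component k ℕ (famT C D) m)
          (TensorProduct.map ψ ψ (Coalgebra.comul (DirectSum.lof k ℕ C (1 + m) x)))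
        = TensorProduct.map (ψn 1) (ψn m) (ΔabC 1 m x) := by
      rw [← LinearMap.comp_apply (TensorProduct.map _ _), ← TensorProduct.map_comp,
        hψcomp 1, hψcomp m, TensorProduct.map_comp, LinearMap.comp_apply]
      congr 1
      exact DFunLike.congr_fun (piAB ΔabC hgrC 1 m) x
    simp only [LinearMap.comp_apply]
    rw [← e1, H2, e2]
  -- now the TFAE
  tfae_have 1 → 2 := fun h a => h a 1
  tfae_have 2 → 1 := fun h => inj_all_of_right ΔabC hgrC h
  tfae_have 1 → 3 := by
    intro ha n
    induction n using Nat.twoStepInduction with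
    | zero => rw [hψ0']; exact fun a b h => h
    | one => rw [hψ1']; exact fun a b h => h
    | more m _ ih1 =>
      have hmap : Function.Injective ⇑(TensorProduct.map (ψn 1) (ψn (m + 1))) := by
        rw [hψ1']
        exact Module.Flat.lTensor_preserves_injective_linearMap (M := C 1) (ψn (m + 1)) ih1
      have hcomp : Function.Injective ⇑(ΔabT 1 (m + 1) ∘ₗ ψn (1 + (m + 1))) := by
        rw [ψrec (m + 1)]
        exact hmap.comp (ha 1 (m + 1))
      have hres : Function.Injective ⇑(ψn (1 + (m + 1))) :=
        Function.Injective.of_comp (f := ⇑(ΔabT 1 (m + 1))) hcomp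
      have e : 1 + (m + 1) = m + 2 := by omega
      rw [e] at hres
      exact hres
  tfae_have 3 → 4 := by
    intro hb
    rw [← LinearMap.ker_eq_bot]
    apply (Submodule.eq_bot_iff _).mpr
    intro x hx
    rw [LinearMap.mem_ker] at hx
    refine DFinsupp.ext fun i => ?_
    have h1 := DFunLike.congr_fun (hψcomp i) x
    simp only [LinearMap.comp_apply, hx, map_zero] at h1
    refine hb i ?_
    simp only [DFinsupp.zero_apply, map_zero]
    exact h1.symm
  tfae_have 4 → 3 := by
    intro hc n x y hxy
    have h1 := DFunLike.congr_fun (hψgr n) x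
    have h2 := DFunLike.congr_fun (hψgr n) y
    simp only [LinearMap.comp_apply] at h1 h2
    have h3 : ψ (DirectSum.lof k ℕ C n x) = ψ (DirectSum.lof k ℕ C n y) := by
      rw [h1, h2, hxy]
    have h4 := hc h3
    have h5 := congrArg (DirectSum.component k ℕ C n) h4
    rwa [DirectSum.component.lof_self, DirectSum.component.lof_self] at h5
  tfae_have 3 → 1 := by
    intro hb
    apply inj_all_of_left ΔabC hgrC
    intro m
    have hcomp : Function.Injective ⇑(ΔabT 1 m ∘ₗ ψn (1 + m)) := by
      simp only [LinearMap.coe_comp]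
      exact Function.Injective.comp (hcot m).1 (hb (1 + m))
    rw [ψrec m] at hcomp
    exact Function.Injective.of_comp (f := ⇑(TensorProduct.map (ψn 1) (ψn m))) hcomp
  tfae_have 1 → 5 := by
    intro ha n
    cases n with
    | zero =>
      rw [truncSub, wpow]
      exact iSup_of_empty _
    | succ n =>
      apply le_antisymm
      · rw [truncSub, wpow]
        apply iSup_le
        rintro ⟨i, hi⟩
        rw [LinearMap.range_le_ker_iff]
        exact psiMap_lof ΔabC hgrC n i (by omega)
      · intro x hx
        rw [wpow, LinearMap.mem_ker] at hx
        have hzero : ∀ m, n + 1 ≤ m → x m = 0 := by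
          intro m hm
          have hdec := DirectSum.sum_support_of x
          have h0 : (Gmap (k := k) (C := C) n m)
              (psiMap k (⨁ j, C j) (LinearMap.range (DirectSum.lof k ℕ C 0)) n x) = 0 := by
            rw [hx, map_zero]
          rw [← hdec, map_sum, map_sum] at h0
          rw [Finset.sum_eq_single m (fun i _ hi => ?_) (fun hm' => ?_)] at h0
          · exact (Gi ΔabC hgrC ha n m hm) (by simpa [DirectSum.lof_eq_of] using h0)
          · have := DFunLike.congr_fun (Gv ΔabC hgrC n m i hm hi) (x i)
            simpa [DirectSum.lof_eq_of] using this
          · rw [DFinsupp.notMem_support_iff.mp hm']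
            simp
        have hdec := DirectSum.sum_support_of x
        rw [← hdec]
        apply Submodule.sum_mem
        intro i hi
        have hile : i < n + 1 := by
          by_contra hcon
          exact DFinsupp.mem_support_iff.mp hi (hzero i (by omega))
        rw [truncSub]
        exact le_iSup (fun j : Fin (n + 1) =>
          LinearMap.range (DirectSum.lof k ℕ C j.1)) ⟨i, hile⟩ ⟨x i, rfl⟩
  tfae_have 5 → 6 := fun h => h 2
  tfae_have 6 → 2 := by
    intro he
    have he' : ∀ (m : ℕ) (x : C m), 2 ≤ m →
        (∀ p1 p2 (h : p1 + p2 = m), 1 ≤ p1 → 1 ≤ p2 →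
          ΔabC p1 p2 (lcast k C h.symm x) = 0) →
        x = 0 := by
      intro m x hm hΔ
      have hker : DirectSum.lof k ℕ C m x ∈
          wpow k (⨁ j, C j) (LinearMap.range (DirectSum.lof k ℕ C 0)) 2 := by
        rw [wpow, LinearMap.mem_ker]
        simp only [psiMap, LinearMap.comp_apply]
        erw [keyApp ΔabC hgrC ((LinearMap.range (DirectSum.lof k ℕ C 0)).mkQ)
          ((LinearMap.range (DirectSum.lof k ℕ C 0)).mkQ) m x]
        refine Finset.sum_eq_zero fun p _ => ?_
        have hp := Finset.HasAntidiagonal.mem_antidiagonal.mp p.2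
        by_cases h1 : p.1.1 = 0
        · have hz : (LinearMap.range (DirectSum.lof k ℕ C 0)).mkQ ∘ₗ
              DirectSum.lof k ℕ C p.1.1 = 0 := by
            rw [h1]; exact mkQ_lof0
          rw [hz, TensorProduct.map_zero_left, LinearMap.zero_apply]
          rfl
        · by_cases h2 : p.1.2 = 0
          · have hz : (LinearMap.range (DirectSum.lof k ℕ C 0)).mkQ ∘ₗ
                DirectSum.lof k ℕ C p.1.2 = 0 := by
              rw [h2]; exact mkQ_lof0
            rw [hz, TensorProduct.map_zero_right, LinearMap.zero_apply]
            rfl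
          · rw [hΔ p.1.1 p.1.2 (Finset.HasAntidiagonal.mem_antidiagonal.mp p.2) (by omega) (by omega),
              map_zero]
            rfl
      rw [← he] at hker
      have hT : truncSub k C 2 ≤ LinearMap.ker (DirectSum.component k ℕ C m) := by
        rw [truncSub]
        apply iSup_le
        rintro ⟨i, hi⟩
        rw [LinearMap.range_le_ker_iff]
        exact comp_lof_ne (by omega)
      have hx0 := hT hker
      rw [LinearMap.mem_ker] at hx0
      rwa [DirectSum.component.lof_self] at hx0
    intro a
    induction a using Nat.strongRecOn with
    | ind a IH =>
    rcases Nat.eq_zero_or_pos a with rfl | ha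
    · exact injΔ_left0 ΔabC hgrC 1
    · have hker : ∀ x : C (a + 1), ΔabC a 1 x = 0 → x = 0 := by
        intro x hx
        apply he' (a + 1) x (by omega)
        intro p1 p2 h h1 h2
        rcases Nat.lt_or_ge p2 2 with hp2 | hp2
        · obtain rfl : p2 = 1 := by omega
          obtain rfl : p1 = a := by omega
          rw [lcast_self]
          exact hx
        · obtain ⟨j, rfl⟩ : ∃ j, p2 = j + 1 := ⟨p2 - 1, by omega⟩
          have hj : 1 ≤ j := by omega
          have hsum : p1 + j = a := by omega
          subst hsum
          have hco' := DFunLike.congr_fun (coassocC ΔabC hgrC p1 j 1)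
            (lcast k C h.symm x)
          simp only [LinearMap.comp_apply, LinearEquiv.coe_coe] at hco'
          rw [lcast_lcast, lcast_self, hx, map_zero, map_zero] at hco'
          have hinj := Module.Flat.lTensor_preserves_injective_linearMap (M := C p1)
            (ΔabC j 1) (IH j (by omega))
          exact hinj (by rw [map_zero]; exact hco'.symm)
      intro x y hxy
      have h0 := hker (x - y) (by rw [map_sub, hxy, sub_self])
      exact sub_eq_zero.mp h0
  tfae_finish
end
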